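/- Let ε > 0 and c > 0, and set z_max := √((-1+√(1+8cε))/(2ε)). Then 4 ∫₀^{z_max} dz / √(2c - z² - εz⁴) = 2^{5/2} / √(1+√(1+8cε)) · K((1-√(1+8cε))/(1+√(1+8cε))); equivalently, this quantity equals 2^{5/2} Φ(-8cε). (This is the period τ¹_ε(c) of the periodic orbit of energy c of the Hamiltonian E¹_ε(z₁,w₁) = w₁²/2 + z₁²/2 + εz₁⁴/2.) -/

import Mathlib

/-- The complete elliptic integral of the first kind,
`K(m) = ∫₀¹ dζ / √((1-ζ²)(1-mζ²))`, defined for `m < 1`. -/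
noncomputable def ellipticK (m : ℝ) : ℝ :=
  ∫ ζ in (0:ℝ)..1, 1 / Real.sqrt ((1 - ζ ^ 2) * (1 - m * ζ ^ 2))

/-- `Φ(x) = K((1-√(1-x))/(1+√(1-x))) / √(1+√(1-x))`, defined for `x < 1`. -/
noncomputable def Phi (x : ℝ) : ℝ :=
  ellipticK ((1 - Real.sqrt (1 - x)) / (1 + Real.sqrt (1 - x))) /
    Real.sqrt (1 + Real.sqrt (1 - x))

/-!
If `L > 0` is the turning point, `εL⁴ + L² = 2c`, the quartic factors over its two
roots in `z²` as `2c - z² - εz⁴ = 2c (1 - (z/L)²)(1 - m (z/L)²)` with `m = -εL⁴/(2c)`,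
the ratio of the two roots. The substitution `z = Lζ` then turns the period integral into
`L/√(2c) · K(m)`. For `L² = (√(1+8cε) - 1)/(2ε)` one gets `m = (1-√(1+8cε))/(1+√(1+8cε))` and
`4L/√(2c) = 4√2/√(1+√(1+8cε))`.
-/

open Real intervalIntegral

theorem integral_one_div_sqrt_legendre_form_eq (κ m L : ℝ) (hκ : 0 ≤ κ) :
    ∫ z in (0:ℝ)..L, 1 / √(κ * ((1 - (z / L) ^ 2) * (1 - m * (z / L) ^ 2))) =
      L / √κ * ellipticK m := by
  rcases eq_or_ne L 0 with rfl | hL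
  · simp
  have h := smul_integral_comp_mul_left (a := 0) (b := 1)
    (fun z : ℝ => 1 / √(κ * ((1 - (z / L) ^ 2) * (1 - m * (z / L) ^ 2)))) L
  simp only [mul_zero, mul_one, smul_eq_mul, mul_div_cancel_left₀ _ hL] at h
  rw [← h, ellipticK, div_eq_mul_inv, mul_assoc, ← integral_const_mul (√κ)⁻¹]
  congr 1
  refine intervalIntegral.integral_congr fun ζ _ => ?_
  simp only [sqrt_mul hκ, one_div, mul_inv]

theorem two_mul_sub_sq_sub_mul_pow_four_eq {ε c L m : ℝ} (hL : L ≠ 0)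
    (hroot : ε * L ^ 4 + L ^ 2 = 2 * c) (hm : 2 * c * m = -(ε * L ^ 4)) (z : ℝ) :
    2 * c - z ^ 2 - ε * z ^ 4 = 2 * c * ((1 - (z / L) ^ 2) * (1 - m * (z / L) ^ 2)) := by
  have hz : z ^ 2 = (z / L) ^ 2 * L ^ 2 := by field_simp
  rw [show z ^ 4 = (z ^ 2) ^ 2 by ring, hz]
  generalize (z / L) ^ 2 = t
  linear_combination (-t) * hroot + (t - t ^ 2) * hm

theorem integral_one_div_sqrt_quartic_eq {ε c L m : ℝ} (hc : 0 ≤ c) (hL : L ≠ 0)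
    (hroot : ε * L ^ 4 + L ^ 2 = 2 * c) (hm : 2 * c * m = -(ε * L ^ 4)) :
    ∫ z in (0:ℝ)..L, 1 / √(2 * c - z ^ 2 - ε * z ^ 4) = L / √(2 * c) * ellipticK m := by
  simp only [two_mul_sub_sq_sub_mul_pow_four_eq hL hroot hm]
  exact integral_one_div_sqrt_legendre_form_eq _ _ _ (by positivity)

theorem two_rpow_five_div_two : (2:ℝ) ^ ((5:ℝ) / 2) = 4 * √2 := by
  rw [show (5:ℝ) / 2 = 2 + 1 / 2 by norm_num, rpow_add two_pos, rpow_two, sqrt_eq_rpow]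
  norm_num

noncomputable def zMax (ε c : ℝ) : ℝ := √((-1 + √(1 + 8 * c * ε)) / (2 * ε))

section TurningPoint

variable {ε c : ℝ} (hε : 0 < ε) (hc : 0 < c)
include hε hc

theorem one_lt_sqrt_one_add_eight_mul : 1 < √(1 + 8 * c * ε) := by
  rw [lt_sqrt zero_le_one]
  nlinarith [mul_pos hc hε]

theorem sq_sqrt_one_add_eight_mul : √(1 + 8 * c * ε) ^ 2 = 1 + 8 * c * ε :=
  sq_sqrt (by nlinarith [mul_pos hc hε])

theorem zMax_sq : zMax ε c ^ 2 = (-1 + √(1 + 8 * c * ε)) / (2 * ε) :=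
  sq_sqrt (div_nonneg (by linarith [one_lt_sqrt_one_add_eight_mul hε hc]) (by positivity))

theorem zMax_pos : 0 < zMax ε c :=
  sqrt_pos.2 (div_pos (by linarith [one_lt_sqrt_one_add_eight_mul hε hc]) (by positivity))

theorem mul_zMax_pow_four_add_zMax_sq : ε * zMax ε c ^ 4 + zMax ε c ^ 2 = 2 * c := by
  have hs2 := sq_sqrt_one_add_eight_mul hε hc
  rw [show zMax ε c ^ 4 = (zMax ε c ^ 2) ^ 2 by ring, zMax_sq hε hc]
  generalize √(1 + 8 * c * ε) = s at hs2 ⊢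
  field_simp
  linear_combination hs2

theorem two_mul_mul_modulus_eq_neg_mul_zMax_pow_four :
    2 * c * ((1 - √(1 + 8 * c * ε)) / (1 + √(1 + 8 * c * ε))) = -(ε * zMax ε c ^ 4) := by
  have hs := one_lt_sqrt_one_add_eight_mul hε hc
  have hs2 := sq_sqrt_one_add_eight_mul hε hc
  rw [show zMax ε c ^ 4 = (zMax ε c ^ 2) ^ 2 by ring, zMax_sq hε hc]
  generalize √(1 + 8 * c * ε) = s at hs hs2 ⊢
  field_simp
  linear_combination (s - 1) * hs2

theorem four_mul_zMax_div_sqrt :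
    4 * (zMax ε c / √(2 * c)) = (2:ℝ) ^ ((5:ℝ) / 2) / √(1 + √(1 + 8 * c * ε)) := by
  have hratio : (-1 + √(1 + 8 * c * ε)) / (2 * ε) / (2 * c) = 2 / (1 + √(1 + 8 * c * ε)) := by
    have hs := one_lt_sqrt_one_add_eight_mul hε hc
    have hs2 := sq_sqrt_one_add_eight_mul hε hc
    generalize √(1 + 8 * c * ε) = s at hs hs2 ⊢
    field_simp
    linear_combination hs2
  rw [zMax, ← sqrt_div' _ (by positivity), hratio, sqrt_div zero_le_two, two_rpow_five_div_two]
  ring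

end TurningPoint

theorem period_tau1 (ε c : ℝ) (hε : 0 < ε) (hc : 0 < c) :
    (4 * ∫ z in (0:ℝ)..Real.sqrt ((-1 + Real.sqrt (1 + 8 * c * ε)) / (2 * ε)),
        1 / Real.sqrt (2 * c - z ^ 2 - ε * z ^ 4)) =
      (2:ℝ) ^ ((5:ℝ) / 2) / Real.sqrt (1 + Real.sqrt (1 + 8 * c * ε)) *
        ellipticK ((1 - Real.sqrt (1 + 8 * c * ε)) / (1 + Real.sqrt (1 + 8 * c * ε))) ∧
    (4 * ∫ z in (0:ℝ)..Real.sqrt ((-1 + Real.sqrt (1 + 8 * c * ε)) / (2 * ε)),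
        1 / Real.sqrt (2 * c - z ^ 2 - ε * z ^ 4)) =
      (2:ℝ) ^ ((5:ℝ) / 2) * Phi (-(8 * c * ε)) := by
  have hperiod : (4 * ∫ z in (0:ℝ)..zMax ε c, 1 / √(2 * c - z ^ 2 - ε * z ^ 4)) =
      (2:ℝ) ^ ((5:ℝ) / 2) / √(1 + √(1 + 8 * c * ε)) *
        ellipticK ((1 - √(1 + 8 * c * ε)) / (1 + √(1 + 8 * c * ε))) := by
    rw [integral_one_div_sqrt_quartic_eq hc.le (zMax_pos hε hc).ne'
      (mul_zMax_pow_four_add_zMax_sq hε hc) (two_mul_mul_modulus_eq_neg_mul_zMax_pow_four hε hc),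
      ← four_mul_zMax_div_sqrt hε hc]
    ring
  rw [zMax] at hperiod
  refine ⟨hperiod, ?_⟩
  rw [hperiod, Phi, sub_neg_eq_add]
  ring
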